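/- Let d ≥ 1, let Ω ⊆ ℝ^d be a bounded open set, and let q : ℝ^d → ℝ be a C² function with compact support contained in Ω. Let f : ℝ^d → ℝ^d be C¹ and D : ℝ^d → ℝ^{d×d} be C², and suppose: (i) ∑_{i,j} D_{ij}(x) ξ_i ξ_j ≥ C_D |ξ|² for all x ∈ Ω and ξ ∈ ℝ^d, where C_D > 0; (ii) ∫_Ω u² dx ≤ C_P ∫_Ω |∇u|² dx for every C¹ function u compactly supported in Ω, where C_P > 0. Then, with b_i = (1/2) ∑_{j=1}^d ∂_{x_j} D_{ij} − f_i and ℒq = −∑_{i=1}^d ∂_{x_i}(f_i q) + (1/2) ∑_{i,j=1}^d ∂_{x_i}∂_{x_j}(D_{ij} q), one has ∫_Ω q(x)² ( C_D/C_P − (∇·b)(x) ) dx ≤ −2 ∫_Ω (ℒq)(x) q(x) dx. -/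

import Mathlib

/-!
Write `ℒq = ∇·J` with the probability flux `J = b q + (1/2) D ∇q`. Integrating by parts against
`q`, `-2 ∫ (ℒq) q = 2 ∫ ∇q · J = ∫ b · ∇(q²) + ∫ ∇q · D ∇q`, and a second integration by parts
turns `∫ b · ∇(q²)` into `-∫ q² ∇·b`. Ellipticity and the Poincaré inequality bound
`∫ ∇q · D ∇q` below by `(C_D / C_P) ∫ q²`.
-/

open MeasureTheory

/-- Partial derivative in the `i`-th coordinate direction. -/
noncomputable def pd {d : ℕ} (i : Fin d) (g : (Fin d → ℝ) → ℝ) : (Fin d → ℝ) → ℝ :=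
  fun x => fderiv ℝ g x (Pi.single i 1)

/-- The Fokker-Planck operator `ℒq = -∑ᵢ ∂ᵢ(fᵢ q) + (1/2) ∑ᵢⱼ ∂ᵢ∂ⱼ(Dᵢⱼ q)`. -/
noncomputable def fokkerPlanck {d : ℕ} (f : (Fin d → ℝ) → Fin d → ℝ)
    (D : (Fin d → ℝ) → Fin d → Fin d → ℝ) (q : (Fin d → ℝ) → ℝ) : (Fin d → ℝ) → ℝ :=
  fun x => -(∑ i, pd i (fun y => f y i * q y) x)
    + (1 / 2) * ∑ i, ∑ j, pd i (pd j (fun y => D y i j * q y)) x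

/-- The vector field `bᵢ = (1/2) ∑ⱼ ∂ⱼ Dᵢⱼ - fᵢ`. -/
noncomputable def bvec {d : ℕ} (f : (Fin d → ℝ) → Fin d → ℝ)
    (D : (Fin d → ℝ) → Fin d → Fin d → ℝ) : (Fin d → ℝ) → Fin d → ℝ :=
  fun x i => (1 / 2) * ∑ j, pd j (fun y => D y i j) x - f x i

/-- The divergence `∇·b = ∑ᵢ ∂ᵢ bᵢ` of the vector field `b`. -/
noncomputable def divb {d : ℕ} (f : (Fin d → ℝ) → Fin d → ℝ)
    (D : (Fin d → ℝ) → Fin d → Fin d → ℝ) : (Fin d → ℝ) → ℝ :=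
  fun x => ∑ i, pd i (fun y => bvec f D y i) x

section

variable {d : ℕ}

section PartialDerivative

variable {g h : (Fin d → ℝ) → ℝ}

theorem contDiff_pd {m n : WithTop ℕ∞} (hg : ContDiff ℝ n g) (hmn : m + 1 ≤ n) (i : Fin d) :
    ContDiff ℝ m (pd i g) := by
  exact (ContinuousLinearMap.apply ℝ ℝ (Pi.single i 1)).contDiff.comp (hg.fderiv_right hmn)

theorem continuous_pd (hg : ContDiff ℝ 1 g) (i : Fin d) : Continuous (pd i g) :=
  (contDiff_pd (m := 0) hg le_rfl i).continuous

theorem hasCompactSupport_pd (hg : HasCompactSupport g) (i : Fin d) :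
    HasCompactSupport (pd i g) :=
  (hg.fderiv ℝ).comp_left (g := fun L : (Fin d → ℝ) →L[ℝ] ℝ => L (Pi.single i 1)) rfl

theorem pd_eq_zero_of_notMem_tsupport {i : Fin d} {x : Fin d → ℝ} (hx : x ∉ tsupport g) :
    pd i g x = 0 := by
  rw [pd, fderiv_of_notMem_tsupport ℝ hx]
  rfl

theorem pd_mul {i : Fin d} (hg : Differentiable ℝ g) (hh : Differentiable ℝ h) (x : Fin d → ℝ) :
    pd i (fun y => g y * h y) x = pd i g x * h x + g x * pd i h x := by
  simp only [pd, fderiv_fun_mul (hg x) (hh x), add_apply, smul_apply, smul_eq_mul]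
  ring

end PartialDerivative

section IntegrationByParts

variable {u v : (Fin d → ℝ) → ℝ}

theorem integral_mul_pd_eq_neg (hu : ContDiff ℝ 1 u) (hv : ContDiff ℝ 1 v)
    (hcu : HasCompactSupport u) (i : Fin d) :
    ∫ x, u x * pd i v x = -∫ x, pd i u x * v x :=
  integral_mul_fderiv_eq_neg_fderiv_mul_of_integrable
    (((continuous_pd hu i).mul hv.continuous).integrable_of_hasCompactSupport
      (hasCompactSupport_pd hcu i).mul_right)
    ((hu.continuous.mul (continuous_pd hv i)).integrable_of_hasCompactSupport hcu.mul_right)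
    ((hu.continuous.mul hv.continuous).integrable_of_hasCompactSupport hcu.mul_right)
    (fun x _ => hu.differentiable one_ne_zero x) (fun x _ => hv.differentiable one_ne_zero x)

noncomputable def divergence (V : (Fin d → ℝ) → Fin d → ℝ) : (Fin d → ℝ) → ℝ :=
  fun x => ∑ i, pd i (fun y => V y i) x

theorem integral_mul_divergence_eq_neg {V : (Fin d → ℝ) → Fin d → ℝ} (hu : ContDiff ℝ 1 u)
    (hcu : HasCompactSupport u) (hV : ∀ i, ContDiff ℝ 1 (fun y => V y i)) :
    ∫ x, u x * divergence V x = -∫ x, ∑ i, pd i u x * V x i := by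
  have hl (i : Fin d) : Integrable (fun x => u x * pd i (fun y => V y i) x) :=
    (hu.continuous.mul (continuous_pd (hV i) i)).integrable_of_hasCompactSupport hcu.mul_right
  have hr (i : Fin d) : Integrable (fun x => pd i u x * V x i) :=
    ((continuous_pd hu i).mul (hV i).continuous).integrable_of_hasCompactSupport
      (hasCompactSupport_pd hcu i).mul_right
  simp only [divergence, Finset.mul_sum]
  rw [integral_finsetSum _ fun i _ => hl i, integral_finsetSum _ fun i _ => hr i,
    ← Finset.sum_neg_distrib]
  exact Finset.sum_congr rfl fun i _ => integral_mul_pd_eq_neg hu (hV i) hcu i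

end IntegrationByParts

section FokkerPlanck

variable {f : (Fin d → ℝ) → Fin d → ℝ} {D : (Fin d → ℝ) → Fin d → Fin d → ℝ}
  {q : (Fin d → ℝ) → ℝ}

noncomputable def flux (f : (Fin d → ℝ) → Fin d → ℝ) (D : (Fin d → ℝ) → Fin d → Fin d → ℝ)
    (q : (Fin d → ℝ) → ℝ) : (Fin d → ℝ) → Fin d → ℝ :=
  fun x i => -(f x i * q x) + (1 / 2) * ∑ j, pd j (fun y => D y i j * q y) x

theorem contDiff_flux (hf : ContDiff ℝ 1 f) (hD : ContDiff ℝ 2 D) (hq : ContDiff ℝ 2 q)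
    (i : Fin d) : ContDiff ℝ 1 (fun y => flux f D q y i) := by
  have hDq (j : Fin d) : ContDiff ℝ 2 (fun y => D y i j * q y) :=
    ((contDiff_apply_apply ℝ ℝ i j).comp hD).mul hq
  exact ((contDiff_apply ℝ ℝ i).comp hf |>.mul (hq.of_le one_le_two)).neg.add
    (contDiff_const.mul (ContDiff.sum fun j _ => contDiff_pd (hDq j) le_rfl j))

theorem fokkerPlanck_eq_divergence_flux (hf : ContDiff ℝ 1 f) (hD : ContDiff ℝ 2 D)
    (hq : ContDiff ℝ 2 q) : fokkerPlanck f D q = divergence (flux f D q) := by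
  funext x
  have hfq (i : Fin d) : Differentiable ℝ (fun y => f y i * q y) :=
    (((contDiff_apply ℝ ℝ i).comp hf).mul (hq.of_le one_le_two)).differentiable one_ne_zero
  have hDq (i j : Fin d) : Differentiable ℝ (pd j (fun y => D y i j * q y)) :=
    (contDiff_pd (((contDiff_apply_apply ℝ ℝ i j).comp hD).mul hq) le_rfl j).differentiable
      one_ne_zero
  simp only [fokkerPlanck, divergence, flux]
  rw [← Finset.sum_neg_distrib, Finset.mul_sum, ← Finset.sum_add_distrib]
  refine Finset.sum_congr rfl fun i _ => ?_
  have hsum : DifferentiableAt ℝ (fun y => ∑ j, pd j (fun z => D z i j * q z) y) x :=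
    DifferentiableAt.fun_sum fun j _ => hDq i j x
  conv_rhs => rw [pd]
  rw [fderiv_fun_add (hfq i x).fun_neg (hsum.const_mul _), fderiv_fun_neg, fderiv_const_mul hsum,
    fderiv_fun_sum fun j _ => hDq i j x]
  simp [pd]

theorem flux_eq (hD : ContDiff ℝ 1 D) (hq : ContDiff ℝ 1 q) (x : Fin d → ℝ) (i : Fin d) :
    flux f D q x i = bvec f D x i * q x + (1 / 2) * ∑ j, D x i j * pd j q x := by
  have hDij (j : Fin d) : Differentiable ℝ (fun y => D y i j) :=
    ((contDiff_apply_apply ℝ ℝ i j).comp hD).differentiable one_ne_zero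
  simp only [flux, bvec, pd_mul (hDij _) (hq.differentiable one_ne_zero), Finset.sum_add_distrib,
    ← Finset.sum_mul]
  ring

theorem contDiff_bvec (hf : ContDiff ℝ 1 f) (hD : ContDiff ℝ 2 D) (i : Fin d) :
    ContDiff ℝ 1 (fun y => bvec f D y i) :=
  (contDiff_const.mul (ContDiff.sum fun j _ =>
    contDiff_pd ((contDiff_apply_apply ℝ ℝ i j).comp hD) le_rfl j)).sub
    ((contDiff_apply ℝ ℝ i).comp hf)

theorem divb_eq_divergence : divb f D = divergence (bvec f D) := rfl

noncomputable def diffusionEnergy (D : (Fin d → ℝ) → Fin d → Fin d → ℝ) (q : (Fin d → ℝ) → ℝ) :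
    (Fin d → ℝ) → ℝ :=
  fun x => ∑ i, ∑ j, D x i j * pd i q x * pd j q x

theorem integrable_diffusionEnergy (hD : Continuous D) (hq : ContDiff ℝ 1 q)
    (hqc : HasCompactSupport q) : Integrable (diffusionEnergy D q) :=
  integrable_finsetSum _ fun i _ => integrable_finsetSum _ fun j _ =>
    ((((continuous_apply_apply i j).comp hD).mul (continuous_pd hq i)).mul
      (continuous_pd hq j)).integrable_of_hasCompactSupport
      (hasCompactSupport_pd hqc i).mul_left.mul_right

theorem neg_two_mul_integral_fokkerPlanck_mul_self (hf : ContDiff ℝ 1 f) (hD : ContDiff ℝ 2 D)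
    (hq : ContDiff ℝ 2 q) (hqc : HasCompactSupport q) :
    -2 * ∫ x, fokkerPlanck f D q x * q x
      = -(∫ x, q x ^ 2 * divb f D x) + ∫ x, diffusionEnergy D q x := by
  have hq1 : ContDiff ℝ 1 q := hq.of_le one_le_two
  have hqd : Differentiable ℝ q := hq1.differentiable one_ne_zero
  have hflux : ∫ x, fokkerPlanck f D q x * q x = -∫ x, ∑ i, pd i q x * flux f D q x i := by
    rw [← integral_mul_divergence_eq_neg hq1 hqc (contDiff_flux hf hD hq),
      fokkerPlanck_eq_divergence_flux hf hD hq]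
    simp only [mul_comm]
  have hdrift : ∫ x, ∑ i, pd i (fun y => q y * q y) x * bvec f D x i
      = -∫ x, q x ^ 2 * divb f D x := by
    rw [← neg_eq_iff_eq_neg, ← integral_mul_divergence_eq_neg (hq1.mul hq1) (hqc.mul_right)
      (contDiff_bvec hf hD), divb_eq_divergence]
    simp only [sq]
  have hpoint (x : Fin d → ℝ) : 2 * ∑ i, pd i q x * flux f D q x i
      = ∑ i, pd i (fun y => q y * q y) x * bvec f D x i + diffusionEnergy D q x := by
    simp only [diffusionEnergy, Finset.mul_sum, ← Finset.sum_add_distrib]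
    refine Finset.sum_congr rfl fun i _ => ?_
    have hquad : ∑ j, D x i j * pd i q x * pd j q x = pd i q x * ∑ j, D x i j * pd j q x := by
      rw [Finset.mul_sum]
      exact Finset.sum_congr rfl fun j _ => by ring
    rw [flux_eq (hD.of_le one_le_two) hq1, pd_mul hqd hqd, hquad]
    ring
  have hdrift_int : Integrable (fun x => ∑ i, pd i (fun y => q y * q y) x * bvec f D x i) :=
    integrable_finsetSum _ fun i _ =>
      ((continuous_pd (hq1.mul hq1) i).mul (contDiff_bvec hf hD i).continuous)
        |>.integrable_of_hasCompactSupport (hasCompactSupport_pd hqc.mul_right i).mul_right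
  calc -2 * ∫ x, fokkerPlanck f D q x * q x = ∫ x, 2 * ∑ i, pd i q x * flux f D q x i := by
        rw [hflux, integral_const_mul]
        ring
    _ = ∫ x, (∑ i, pd i (fun y => q y * q y) x * bvec f D x i + diffusionEnergy D q x) := by
        simp only [hpoint]
    _ = _ := by
        rw [integral_add hdrift_int (integrable_diffusionEnergy hD.continuous hq1 hqc), hdrift]

end FokkerPlanck

theorem div_mul_setIntegral_sq_le_integral_diffusionEnergy {Ω : Set (Fin d → ℝ)}
    (hΩ : MeasurableSet Ω) {q : (Fin d → ℝ) → ℝ} (hq : ContDiff ℝ 1 q)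
    (hqc : HasCompactSupport q) (hqΩ : tsupport q ⊆ Ω) {D : (Fin d → ℝ) → Fin d → Fin d → ℝ}
    (hD : Continuous D) {C_D C_P : ℝ} (hCD : 0 ≤ C_D) (hCP : 0 < C_P)
    (hell : ∀ x ∈ Ω, ∀ ξ : Fin d → ℝ, C_D * ∑ i, (ξ i) ^ 2 ≤ ∑ i, ∑ j, D x i j * ξ i * ξ j)
    (hpoincare : ∫ x in Ω, (q x) ^ 2 ≤ C_P * ∫ x in Ω, ∑ i, (pd i q x) ^ 2) :
    C_D / C_P * (∫ x in Ω, (q x) ^ 2) ≤ ∫ x, diffusionEnergy D q x := by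
  have hgrad : Integrable (fun x => ∑ i, (pd i q x) ^ 2) :=
    integrable_finsetSum _ fun i _ =>
      ((continuous_pd hq i).pow 2).integrable_of_hasCompactSupport
        ((hasCompactSupport_pd hqc i).comp_left (zero_pow two_ne_zero))
  calc C_D / C_P * (∫ x in Ω, (q x) ^ 2)
      ≤ C_D / C_P * (C_P * ∫ x in Ω, ∑ i, (pd i q x) ^ 2) := by gcongr
    _ = ∫ x in Ω, C_D * ∑ i, (pd i q x) ^ 2 := by
        rw [integral_const_mul]
        field_simp
    _ ≤ ∫ x in Ω, diffusionEnergy D q x :=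
        setIntegral_mono_on (hgrad.const_mul C_D).integrableOn
          (integrable_diffusionEnergy hD hq hqc).integrableOn hΩ
          fun x hx => hell x hx fun i => pd i q x
    _ = ∫ x, diffusionEnergy D q x := by
        refine setIntegral_eq_integral_of_forall_compl_eq_zero fun x hx => ?_
        simp [diffusionEnergy, pd_eq_zero_of_notMem_tsupport fun h => hx (hqΩ h)]

end

theorem stmt_2_general {d : ℕ}
    (Ω : Set (Fin d → ℝ)) (hΩopen : IsOpen Ω)
    (q : (Fin d → ℝ) → ℝ) (hq : ContDiff ℝ 2 q)
    (hqsupp : HasCompactSupport q) (hqΩ : tsupport q ⊆ Ω)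
    (f : (Fin d → ℝ) → Fin d → ℝ) (hf : ContDiff ℝ 1 f)
    (D : (Fin d → ℝ) → Fin d → Fin d → ℝ) (hD : ContDiff ℝ 2 D)
    (C_D : ℝ) (hCD : 0 < C_D)
    (hell : ∀ x ∈ Ω, ∀ ξ : Fin d → ℝ,
      C_D * ∑ i, (ξ i) ^ 2 ≤ ∑ i, ∑ j, D x i j * ξ i * ξ j)
    (C_P : ℝ) (hCP : 0 < C_P)
    (hpoincare : ∀ u : (Fin d → ℝ) → ℝ, ContDiff ℝ 1 u → HasCompactSupport u →
      tsupport u ⊆ Ω → ∫ x in Ω, (u x) ^ 2 ≤ C_P * ∫ x in Ω, ∑ i, (pd i u x) ^ 2) :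
    ∫ x in Ω, (q x) ^ 2 * (C_D / C_P - divb f D x)
      ≤ -2 * ∫ x in Ω, fokkerPlanck f D q x * q x := by
  have hq1 : ContDiff ℝ 1 q := hq.of_le one_le_two
  have hq0 : ∀ x ∉ Ω, q x = 0 := fun x hx => image_eq_zero_of_notMem_tsupport fun h => hx (hqΩ h)
  have hsq_supp : HasCompactSupport (fun x => (q x) ^ 2) :=
    hqsupp.comp_left (zero_pow two_ne_zero)
  have hsq : Integrable (fun x => (q x) ^ 2) :=
    (hq1.continuous.pow 2).integrable_of_hasCompactSupport hsq_supp
  have hsq_div : Integrable (fun x => (q x) ^ 2 * divb f D x) :=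
    (hq1.continuous.pow 2 |>.mul <| continuous_finsetSum _ fun i _ =>
      continuous_pd (contDiff_bvec hf hD i) i).integrable_of_hasCompactSupport hsq_supp.mul_right
  have hlhs : ∫ x in Ω, (q x) ^ 2 * (C_D / C_P - divb f D x)
      = C_D / C_P * (∫ x in Ω, (q x) ^ 2) - ∫ x, (q x) ^ 2 * divb f D x := by
    simp only [mul_sub, mul_comm _ (C_D / C_P)]
    rw [integral_sub (hsq.const_mul _).integrableOn hsq_div.integrableOn, integral_const_mul,
      setIntegral_eq_integral_of_forall_compl_eq_zero (f := fun x => (q x) ^ 2 * divb f D x)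
        fun x hx => by simp [hq0 x hx]]
  rw [hlhs, setIntegral_eq_integral_of_forall_compl_eq_zero
      (f := fun x => fokkerPlanck f D q x * q x) fun x hx => by simp [hq0 x hx],
    neg_two_mul_integral_fokkerPlanck_mul_self hf hD hq hqsupp]
  linarith [div_mul_setIntegral_sq_le_integral_diffusionEnergy hΩopen.measurableSet hq1 hqsupp hqΩ
    hD.continuous hCD.le hCP hell (hpoincare q hq1 hqsupp hqΩ)]

/-- `∫_Ω q² (C_D/C_P - ∇·b) ≤ -2 ∫_Ω (ℒq) q`. -/
theorem stmt_2 {d : ℕ} (hd : 1 ≤ d)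
    (Ω : Set (Fin d → ℝ)) (hΩopen : IsOpen Ω) (hΩbdd : Bornology.IsBounded Ω)
    (q : (Fin d → ℝ) → ℝ) (hq : ContDiff ℝ 2 q)
    (hqsupp : HasCompactSupport q) (hqΩ : tsupport q ⊆ Ω)
    (f : (Fin d → ℝ) → Fin d → ℝ) (hf : ContDiff ℝ 1 f)
    (D : (Fin d → ℝ) → Fin d → Fin d → ℝ) (hD : ContDiff ℝ 2 D)
    (C_D : ℝ) (hCD : 0 < C_D)
    (hell : ∀ x ∈ Ω, ∀ ξ : Fin d → ℝ,
      C_D * ∑ i, (ξ i) ^ 2 ≤ ∑ i, ∑ j, D x i j * ξ i * ξ j)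
    (C_P : ℝ) (hCP : 0 < C_P)
    (hpoincare : ∀ u : (Fin d → ℝ) → ℝ, ContDiff ℝ 1 u → HasCompactSupport u →
      tsupport u ⊆ Ω → ∫ x in Ω, (u x) ^ 2 ≤ C_P * ∫ x in Ω, ∑ i, (pd i u x) ^ 2) :
    ∫ x in Ω, (q x) ^ 2 * (C_D / C_P - divb f D x)
      ≤ -2 * ∫ x in Ω, fokkerPlanck f D q x * q x :=
  stmt_2_general Ω hΩopen q hq hqsupp hqΩ f hf D hD C_D hCD hell C_P hCP hpoincare
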